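/- With V₀ the polynomial potential V₀(z) = (−1)^{n+1}a_{4n+2}z^{4n+2} + Σ_{j=1}^{4n+1} a_j z^j (a_{4n+2} > 0), the function ω ↦ exp(−i·∫₀^t V₀(z + √i·B_s(ω)) ds) is bounded uniformly in t ∈ [0,T] and locally uniformly in z ∈ ℂ, where B is a standard Brownian motion. -/

import Mathlib

open MeasureTheory ProbabilityTheory Filter Complex Set

noncomputable section

/-- The principal square root of `i`, i.e. `e^{iπ/4}`. -/
def sqrtI : ℂ := Complex.exp (Real.pi / 4 * Complex.I)

/-- A standard one-dimensional Brownian motion starting at `0`. -/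
structure IsBrownianMotion {Ω : Type*} [MeasureSpace Ω] (B : ℝ → Ω → ℝ) : Prop where
  meas : ∀ t, Measurable (B t)
  init : ∀ᵐ ω ∂(volume : Measure Ω), B 0 ω = 0
  cont : ∀ᵐ ω ∂(volume : Measure Ω), Continuous fun t => B t ω
  gauss : ∀ s t : ℝ, 0 ≤ s → s ≤ t →
    Measure.map (fun ω => B t ω - B s ω) (volume : Measure Ω)
      = gaussianReal 0 (Real.toNNReal (t - s))
  indep : ∀ (n : ℕ) (ts : Fin (n + 1) → ℝ), Monotone ts →
    iIndepFun
      (fun i : Fin n => fun ω => B (ts i.succ) ω - B (ts i.castSucc) ω)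
      (volume : Measure Ω)

/-- `‖B‖_{sup,T} = sup_{0 ≤ s ≤ T} |B_s|`. -/
def supNorm {Ω : Type*} (B : ℝ → Ω → ℝ) (T : ℝ) (ω : Ω) : ℝ :=
  ⨆ s : Set.Icc (0 : ℝ) T, |B (s : ℝ) ω|

/-- The analytic extension to `ℂ` of the `m`-th Hermite function. -/
def hermiteFun (m : ℕ) (z : ℂ) : ℂ :=
  ((2 : ℂ) ^ m * (Nat.factorial m : ℂ)) ^ (-(1/2 : ℂ)) * (-1) ^ m *
    (Real.pi : ℂ) ^ (-(1/4 : ℂ)) * Complex.exp (z ^ 2 / 2) *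
      iteratedDeriv m (fun w : ℂ => Complex.exp (-w ^ 2)) z

lemma sqrtI_ne_zero : sqrtI ≠ 0 := Complex.exp_ne_zero _

lemma abs_sqrtI : ‖sqrtI‖ = 1 := by
  rw [sqrtI, Complex.norm_exp]
  simp

lemma sqrtI_sq : sqrtI ^ 2 = Complex.I := by
  rw [sqrtI, ← Complex.exp_nat_mul]
  have : (2:ℕ) * ((Real.pi/4 : ℝ) * Complex.I) = (Real.pi/2 : ℝ) * Complex.I := by push_cast; ring
  rw [show ((Real.pi : ℂ)/4 * Complex.I) = ((Real.pi/4 : ℝ) : ℂ) * Complex.I by push_cast; ring,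
    this, Complex.exp_mul_I, ← Complex.ofReal_cos, ← Complex.ofReal_sin,
    Real.cos_pi_div_two, Real.sin_pi_div_two]
  simp

lemma sqrtI_pow (n : ℕ) : sqrtI ^ (4 * n + 2) = (-1 : ℂ) ^ n * Complex.I := by
  have h : 4 * n + 2 = 2 * (2 * n + 1) := by ring
  rw [h, pow_mul, sqrtI_sq, pow_succ, pow_mul, Complex.I_sq]

lemma aux1 (a A : ℝ) (ha : 0 < a) (hA : 0 ≤ A) (k : ℕ) (t : ℝ) (ht : 0 ≤ t) :
    -a * t ^ (k + 1) + A * t ^ k ≤ A * (A / a) ^ k := by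
  rcases le_total t (A / a) with h | h
  · have h1 : 0 ≤ a * t ^ (k + 1) := by positivity
    have h2 : A * t ^ k ≤ A * (A / a) ^ k :=
      mul_le_mul_of_nonneg_left (pow_le_pow_left₀ ht h k) hA
    linarith
  · have htk : 0 ≤ t ^ k := pow_nonneg ht k
    have hAt : A ≤ t * a := (div_le_iff₀ ha).mp h
    have hM : 0 ≤ A * (A / a) ^ k := by positivity
    nlinarith [pow_succ t k]

lemma aux2 (a E R : ℝ) (ha : 0 < a) (hE : 0 ≤ E) (hR : 0 ≤ R) (k : ℕ) :
    ∃ M : ℝ, ∀ t : ℝ, 0 ≤ t → -a * t ^ (k + 1) + E * (R + t) ^ k ≤ M := by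
  refine ⟨max (E * (2 * R) ^ k) (E * 2 ^ k * (E * 2 ^ k / a) ^ k), fun t ht => ?_⟩
  rcases le_total t R with h | h
  · have h1 : 0 ≤ a * t ^ (k + 1) := by positivity
    have h2 : E * (R + t) ^ k ≤ E * (2 * R) ^ k :=
      mul_le_mul_of_nonneg_left (pow_le_pow_left₀ (by linarith) (by linarith) k) hE
    have := le_max_left (E * (2 * R) ^ k) (E * 2 ^ k * (E * 2 ^ k / a) ^ k)
    linarith
  · have h2 : E * (R + t) ^ k ≤ E * 2 ^ k * t ^ k := by
      have : (R + t) ^ k ≤ (2 * t) ^ k := pow_le_pow_left₀ (by linarith) (by linarith) k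
      calc E * (R + t) ^ k ≤ E * (2 * t) ^ k := mul_le_mul_of_nonneg_left this hE
        _ = E * 2 ^ k * t ^ k := by rw [mul_pow]; ring
    have h3 := aux1 a (E * 2 ^ k) ha (by positivity) k t ht
    have := le_max_right (E * (2 * R) ^ k) (E * 2 ^ k * (E * 2 ^ k / a) ^ k)
    linarith

lemma cnorm_pow_sub_pow_le (x y : ℂ) (m : ℕ) (R : ℝ) (hx : ‖x‖ ≤ R)
    (hy : ‖y‖ ≤ R) :
    ‖(x ^ m - y ^ m)‖ ≤ m * R ^ (m - 1) * ‖(x - y)‖ := by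
  have hR : 0 ≤ R := le_trans (norm_nonneg x) hx
  rw [← geom_sum₂_mul, norm_mul]
  have hsum : ‖(∑ i ∈ Finset.range m, x ^ i * y ^ (m - 1 - i))‖ ≤ m * R ^ (m - 1) := by
    calc ‖(∑ i ∈ Finset.range m, x ^ i * y ^ (m - 1 - i))‖
        ≤ ∑ i ∈ Finset.range m, ‖(x ^ i * y ^ (m - 1 - i))‖ :=
          norm_sum_le _ _
      _ ≤ ∑ i ∈ Finset.range m, R ^ (m - 1) := by
          refine Finset.sum_le_sum fun i hi => ?_
          rw [norm_mul, norm_pow, norm_pow]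
          have hi' : i + (m - 1 - i) = m - 1 := by
            have := Finset.mem_range.mp hi; omega
          calc ‖x‖ ^ i * ‖y‖ ^ (m - 1 - i)
              ≤ R ^ i * R ^ (m - 1 - i) :=
                mul_le_mul (pow_le_pow_left₀ (norm_nonneg _) hx i)
                  (pow_le_pow_left₀ (norm_nonneg _) hy _)
                  (pow_nonneg (norm_nonneg _) _) (pow_nonneg hR i)
            _ = R ^ (m - 1) := by rw [← pow_add, hi']
      _ = m * R ^ (m - 1) := by rw [Finset.sum_const, Finset.card_range, nsmul_eq_mul]
  exact mul_le_mul_of_nonneg_right hsum (norm_nonneg _)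

/-- The uniform pointwise bound on the real part. -/
lemma reBound (n : ℕ) (a : ℕ → ℂ) (a42 : ℝ) (ha : 0 < a42) (K : Set ℂ) (hK : IsCompact K) :
    ∃ M : ℝ, ∀ z ∈ K, ∀ y : ℝ,
      (-Complex.I * ((-1 : ℂ) ^ (n + 1) * (a42 : ℂ) * (z + sqrtI * (y : ℂ)) ^ (4 * n + 2) +
        ∑ j ∈ Finset.Icc 1 (4 * n + 1), a j * (z + sqrtI * (y : ℂ)) ^ j)).re ≤ M := by
  obtain ⟨R₀, hR₀⟩ := hK.isBounded.exists_norm_le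
  set R : ℝ := max R₀ 1 with hRdef
  have hR1 : 1 ≤ R := le_max_right _ _
  have hR : 0 ≤ R := le_trans zero_le_one hR1
  have hzR : ∀ z ∈ K, ‖z‖ ≤ R := fun z hz => le_trans (hR₀ z hz) (le_max_left _ _)
  set S : ℝ := ∑ j ∈ Finset.Icc 1 (4 * n + 1), ‖(a j)‖ with hSdef
  have hS : 0 ≤ S := Finset.sum_nonneg fun j _ => norm_nonneg _
  set E : ℝ := a42 * (4 * n + 2) * R + S with hEdef
  have hE : 0 ≤ E := by positivity
  obtain ⟨M, hM⟩ := aux2 a42 E R ha hE hR (4 * n + 1)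
  refine ⟨M, fun z hz y => ?_⟩
  set t : ℝ := |y| with htdef
  have ht : 0 ≤ t := abs_nonneg y
  set u : ℂ := z / sqrtI with hudef
  have hu : ‖u‖ = ‖z‖ := by
    rw [hudef, norm_div, abs_sqrtI, div_one]
  have huR : ‖u‖ ≤ R := hu ▸ hzR z hz
  have hw : z + sqrtI * (y : ℂ) = sqrtI * (u + y) := by
    rw [hudef, mul_add, mul_comm sqrtI (z / sqrtI), div_mul_cancel₀ _ sqrtI_ne_zero]
  -- leading term
  have hsign : (-1 : ℂ) ^ (n + 1) * (-1 : ℂ) ^ n = -1 := by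
    rw [← pow_add]; exact Odd.neg_one_pow ⟨n, by ring⟩
  have hlead : -Complex.I * ((-1 : ℂ) ^ (n + 1) * (a42 : ℂ) * (z + sqrtI * (y : ℂ)) ^ (4 * n + 2))
      = ((-a42 : ℝ) : ℂ) * (u + y) ^ (4 * n + 2) := by
    rw [hw, mul_pow, sqrtI_pow]
    have h1 : -Complex.I * ((-1 : ℂ) ^ (n + 1) * (a42 : ℂ) *
        ((-1 : ℂ) ^ n * Complex.I * (u + y) ^ (4 * n + 2)))
        = ((-1 : ℂ) ^ (n + 1) * (-1 : ℂ) ^ n) * (-(Complex.I * Complex.I)) * (a42 : ℂ) *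
          (u + y) ^ (4 * n + 2) := by ring
    rw [h1, hsign, Complex.I_mul_I]
    push_cast; ring
  have habs_uy : ‖(u + y)‖ ≤ R + t := by
    calc ‖(u + y)‖ ≤ ‖u‖ + ‖(y : ℂ)‖ := norm_add_le _ _
      _ ≤ R + t := by rw [Complex.norm_real, Real.norm_eq_abs]; exact add_le_add huR le_rfl
  have habs_y : ‖((y : ℂ))‖ ≤ R + t := by
    rw [Complex.norm_real, Real.norm_eq_abs]; linarith
  -- bound on difference of powers
  have hdiff : ‖((u + y) ^ (4 * n + 2) - ((y : ℂ)) ^ (4 * n + 2))‖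
      ≤ (4 * n + 2) * (R + t) ^ (4 * n + 1) * R := by
    have h1 := cnorm_pow_sub_pow_le (u + y) (y : ℂ) (4 * n + 2) (R + t) habs_uy habs_y
    have h2 : ‖((u + y) - y)‖ = ‖u‖ := by ring_nf
    have h3 : (4 * n + 2) - 1 = 4 * n + 1 := by omega
    rw [h3, h2] at h1
    push_cast at h1
    calc ‖((u + y) ^ (4 * n + 2) - ((y : ℂ)) ^ (4 * n + 2))‖
        ≤ (4 * n + 2) * (R + t) ^ (4 * n + 1) * ‖u‖ := h1
      _ ≤ (4 * n + 2) * (R + t) ^ (4 * n + 1) * R := by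
          refine mul_le_mul_of_nonneg_left huR ?_
          positivity
  have hre_lead : (((-a42 : ℝ) : ℂ) * (u + y) ^ (4 * n + 2)).re
      ≤ -a42 * t ^ (4 * n + 2) + a42 * ((4 * n + 2) * (R + t) ^ (4 * n + 1) * R) := by
    rw [Complex.re_ofReal_mul]
    have hsplit : ((u + y) ^ (4 * n + 2)).re
        = y ^ (4 * n + 2) + ((u + y) ^ (4 * n + 2) - ((y : ℂ)) ^ (4 * n + 2)).re := by
      rw [Complex.sub_re]
      have : (((y : ℂ)) ^ (4 * n + 2)).re = y ^ (4 * n + 2) := by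
        rw [← Complex.ofReal_pow, Complex.ofReal_re]
      rw [this]; ring
    have hyt : y ^ (4 * n + 2) = t ^ (4 * n + 2) := by
      rw [htdef, ← Even.pow_abs ⟨2 * n + 1, by ring⟩]
    have hge : ((u + y) ^ (4 * n + 2)).re ≥ t ^ (4 * n + 2)
        - (4 * n + 2) * (R + t) ^ (4 * n + 1) * R := by
      rw [hsplit, hyt]
      have := neg_abs_le (((u + y) ^ (4 * n + 2) - ((y : ℂ)) ^ (4 * n + 2)).re)
      have habs := Complex.abs_re_le_norm ((u + y) ^ (4 * n + 2) - ((y : ℂ)) ^ (4 * n + 2))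
      have := abs_le.mp (le_trans habs hdiff)
      linarith [this.1]
    nlinarith [hge]
  -- bound on the lower order sum
  have hsum : (-Complex.I * (∑ j ∈ Finset.Icc 1 (4 * n + 1),
      a j * (z + sqrtI * (y : ℂ)) ^ j)).re ≤ S * (R + t) ^ (4 * n + 1) := by
    have h0 : (-Complex.I * (∑ j ∈ Finset.Icc 1 (4 * n + 1),
        a j * (z + sqrtI * (y : ℂ)) ^ j)).re
        ≤ ‖(∑ j ∈ Finset.Icc 1 (4 * n + 1), a j * (z + sqrtI * (y : ℂ)) ^ j)‖ := by
      refine le_trans (Complex.re_le_norm _) ?_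
      rw [norm_mul]
      simp
    refine le_trans h0 ?_
    have habsw : ‖(z + sqrtI * (y : ℂ))‖ ≤ R + t := by
      rw [hw, norm_mul, abs_sqrtI, one_mul]
      exact habs_uy
    have hRt1 : (1 : ℝ) ≤ R + t := by linarith
    calc ‖(∑ j ∈ Finset.Icc 1 (4 * n + 1), a j * (z + sqrtI * (y : ℂ)) ^ j)‖
        ≤ ∑ j ∈ Finset.Icc 1 (4 * n + 1), ‖(a j * (z + sqrtI * (y : ℂ)) ^ j)‖ :=
          norm_sum_le _ _
      _ ≤ ∑ j ∈ Finset.Icc 1 (4 * n + 1), ‖(a j)‖ * (R + t) ^ (4 * n + 1) := by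
          refine Finset.sum_le_sum fun j hj => ?_
          rw [norm_mul, norm_pow]
          refine mul_le_mul_of_nonneg_left ?_ (norm_nonneg _)
          calc ‖(z + sqrtI * (y : ℂ))‖ ^ j ≤ (R + t) ^ j :=
                pow_le_pow_left₀ (norm_nonneg _) habsw j
            _ ≤ (R + t) ^ (4 * n + 1) :=
                pow_le_pow_right₀ hRt1 (Finset.mem_Icc.mp hj).2
      _ = S * (R + t) ^ (4 * n + 1) := by rw [← Finset.sum_mul]
  -- combine
  rw [mul_add, Complex.add_re, hlead]
  have hfinal := hM t ht
  have hcomb : (((-a42 : ℝ) : ℂ) * (u + (y:ℂ)) ^ (4 * n + 2)).re ≤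
      -a42 * t ^ (4 * n + 2) + a42 * ((4 * n + 2) * (R + t) ^ (4 * n + 1) * R) := hre_lead
  have hEexp : -a42 * t ^ (4 * n + 2) + a42 * ((4 * n + 2) * (R + t) ^ (4 * n + 1) * R)
      + S * (R + t) ^ (4 * n + 1)
      = -a42 * t ^ (4 * n + 1 + 1) + E * (R + t) ^ (4 * n + 1) := by
    rw [hEdef]; ring
  linarith

/-- Bound for the exponential of an integral with uniformly bounded imaginary part. -/
lemma expBound (f : ℝ → ℂ) (M T t : ℝ) (hT : 0 < T) (ht : t ∈ Set.Icc (0 : ℝ) T)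
    (hpt : ∀ s : ℝ, (f s).im ≤ M) :
    ‖Complex.exp (-Complex.I * ∫ s in (0 : ℝ)..t, f s)‖ ≤ Real.exp (T * max M 0) := by
  have ht0 : 0 ≤ t := ht.1
  have htT : t ≤ T := ht.2
  have hM' : 0 ≤ max M 0 := le_max_right _ _
  have hre : ∀ w : ℂ, (-Complex.I * w).re = w.im := by
    intro w; simp [Complex.mul_re]
  rw [Complex.norm_exp, hre, Real.exp_le_exp]
  by_cases hint : IntervalIntegrable f volume 0 t
  · rw [intervalIntegral.integral_of_le ht0]
    have hIcc : IntegrableOn f (Set.Ioc (0 : ℝ) t) volume := hint.1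
    have h1 : (∫ s in Set.Ioc (0 : ℝ) t, f s).im = ∫ s in Set.Ioc (0 : ℝ) t, (f s).im :=
      (integral_im hIcc).symm
    rw [h1]
    have h2 : ∫ s in Set.Ioc (0 : ℝ) t, (f s).im ≤ ∫ _ in Set.Ioc (0 : ℝ) t, max M 0 := by
      refine setIntegral_mono_on (hIcc.im) (integrableOn_const ?_)
        measurableSet_Ioc fun s _ => le_trans (hpt s) (le_max_left _ _)
      rw [Real.volume_Ioc]
      exact ENNReal.ofReal_ne_top
    have h3 : ∫ _ in Set.Ioc (0 : ℝ) t, max M 0 = t * max M 0 := by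
      rw [setIntegral_const, Real.volume_real_Ioc_of_le ht0, smul_eq_mul]
      ring_nf
    calc (∫ s in Set.Ioc (0 : ℝ) t, (f s).im) ≤ t * max M 0 := by rw [← h3]; exact h2
      _ ≤ T * max M 0 := mul_le_mul_of_nonneg_right htT hM'
  · rw [intervalIntegral.integral_undef hint]
    simp only [Complex.zero_im]
    positivity

/-- For the polynomial potential, `ω ↦ exp(-i ∫₀^t V₀(z + √i B_s(ω)) ds)` is bounded
uniformly in `t ∈ [0,T]` and locally uniformly in `z ∈ ℂ`. -/
theorem stmt_6 {Ω : Type*} [MeasureSpace Ω] [IsProbabilityMeasure (volume : Measure Ω)]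
    (B : ℝ → Ω → ℝ) (hB : IsBrownianMotion B)
    (n : ℕ) (a : ℕ → ℂ) (a42 : ℝ) (ha : 0 < a42) (T : ℝ) (hT : 0 < T)
    (K : Set ℂ) (hK : IsCompact K) :
    ∃ C : ℝ, 0 < C ∧ ∀ z ∈ K, ∀ t ∈ Set.Icc (0 : ℝ) T,
      ∀ᵐ ω ∂(volume : Measure Ω),
        ‖Complex.exp (-Complex.I * ∫ s in (0 : ℝ)..t,
            ((-1 : ℂ) ^ (n + 1) * (a42 : ℂ) * (z + sqrtI * (B s ω : ℂ)) ^ (4 * n + 2) +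
              ∑ j ∈ Finset.Icc 1 (4 * n + 1), a j * (z + sqrtI * (B s ω : ℂ)) ^ j))‖
          ≤ C := by
  obtain ⟨M, hM⟩ := reBound n a a42 ha K hK
  refine ⟨Real.exp (T * max M 0), Real.exp_pos _, fun z hz t ht => ?_⟩
  refine Filter.Eventually.of_forall fun ω => ?_
  refine expBound _ M T t hT ht fun s => ?_
  have h := hM z hz (B s ω)
  have hre : ∀ w : ℂ, (-Complex.I * w).re = w.im := by
    intro w; simp [Complex.mul_re]
  rwa [hre] at h
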